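/- Let β > 0, γ ∈ (0,1), and let s, z, ȳ, u, v, y₀ : (0,∞) → ℝ be differentiable, set x₀ := y₀ − z, and assume y₀'(r) + y₀(r)/r = γ(z'(r) + z(r)/r) for all r > 0. For λ ≥ 0 define the energy density of the scaled configuration H_λ := (s')² + (z s)² + (β/4)(s² − 1)² + (1/γ)(√λ v' + √λ v/r + 2(y₀ + λȳ)√λ u)² + (1/γ)((y₀ + λȳ)' + (y₀ + λȳ)/r − 2λuv)² + (1/(1−γ))((x₀ + λȳ)' + (x₀ + λȳ)/r)² + λ(u² + v²)s². Then for all r > 0 and λ ≥ 0: H_λ − H₀ = λ h₁ + λ² h₂ + λ³ h₃, where h₁ := (1/γ)[(v' + v/r + 2y₀u)² − 4(y₀' + y₀/r)uv + γ(u² + v²)s²], h₂ := (1/γ)[4(v'ȳ − ȳ'v)u + 4(2y₀ȳ + v²)u² + (1/(1−γ))(ȳ' + ȳ/r)²], and h₃ := (4/γ) ȳ² u². -/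
import Mathlib


open Set Filter MeasureTheory Topology Real

/-- The energy density of the scaled configuration `y = y₀ + λȳ`, `x = y − z`,
`u_λ = √λ u`, `v_λ = √λ v` about the embedded Nielsen–Olesen vortex (with Higgs
profile `s` and gauge profile `z` held fixed, and `x₀ = y₀ − z`). -/
noncomputable def Hfam (β γ lam : ℝ) (s s' z z' yb yb' u v v' y0 y0' : ℝ → ℝ)
    (r : ℝ) : ℝ :=
  s' r ^ 2 + (z r * s r) ^ 2 + β / 4 * (s r ^ 2 - 1) ^ 2
  + (1 / γ) * (Real.sqrt lam * v' r + Real.sqrt lam * v r / r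
      + 2 * (y0 r + lam * yb r) * (Real.sqrt lam * u r)) ^ 2
  + (1 / γ) * ((y0' r + lam * yb' r) + (y0 r + lam * yb r) / r
      - 2 * lam * u r * v r) ^ 2
  + (1 / (1 - γ)) * (((y0' r - z' r) + lam * yb' r)
      + ((y0 r - z r) + lam * yb r) / r) ^ 2
  + lam * (u r ^ 2 + v r ^ 2) * s r ^ 2

/-- The scaling identity `H_λ − H₀ = λ h₁ + λ² h₂ + λ³ h₃` for the energy density of
the scaled configuration about the embedded Nielsen–Olesen vortex. -/
theorem statement15 (β γ : ℝ) (hβ : 0 < β) (hγ : γ ∈ Set.Ioo (0:ℝ) 1)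
    (s z yb u v y0 s' z' yb' u' v' y0' : ℝ → ℝ)
    (hsd : ∀ r ∈ Set.Ioi (0:ℝ), HasDerivAt s (s' r) r)
    (hzd : ∀ r ∈ Set.Ioi (0:ℝ), HasDerivAt z (z' r) r)
    (hybd : ∀ r ∈ Set.Ioi (0:ℝ), HasDerivAt yb (yb' r) r)
    (hud : ∀ r ∈ Set.Ioi (0:ℝ), HasDerivAt u (u' r) r)
    (hvd : ∀ r ∈ Set.Ioi (0:ℝ), HasDerivAt v (v' r) r)
    (hy0d : ∀ r ∈ Set.Ioi (0:ℝ), HasDerivAt y0 (y0' r) r)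
    (hconstr : ∀ r ∈ Set.Ioi (0:ℝ), y0' r + y0 r / r = γ * (z' r + z r / r)) :
    ∀ r ∈ Set.Ioi (0:ℝ), ∀ lam : ℝ, 0 ≤ lam →
      Hfam β γ lam s s' z z' yb yb' u v v' y0 y0' r
        - Hfam β γ 0 s s' z z' yb yb' u v v' y0 y0' r
      = lam * ((1 / γ) * ((v' r + v r / r + 2 * y0 r * u r) ^ 2
            - 4 * (y0' r + y0 r / r) * u r * v r
            + γ * (u r ^ 2 + v r ^ 2) * s r ^ 2))
        + lam ^ 2 * ((1 / γ) * (4 * (v' r * yb r - yb' r * v r) * u r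
            + 4 * (2 * y0 r * yb r + v r ^ 2) * u r ^ 2
            + (1 / (1 - γ)) * (yb' r + yb r / r) ^ 2))
        + lam ^ 3 * ((4 / γ) * yb r ^ 2 * u r ^ 2) := by
  intro r hr lam hlam
  have hy0' : y0' r = γ * (z' r + z r / r) - y0 r / r := by
    have := hconstr r hr; linarith
  have hw : Real.sqrt lam * Real.sqrt lam = lam := Real.mul_self_sqrt hlam
  simp only [Hfam, hy0', Real.sqrt_zero]
  generalize Real.sqrt lam = w at hw ⊢
  subst hw
  have hγ0 : γ ≠ 0 := ne_of_gt hγ.1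
  have h1γ : (1:ℝ) - γ ≠ 0 := ne_of_gt (by linarith [hγ.2])
  have hr0 : r ≠ 0 := ne_of_gt (Set.mem_Ioi.mp hr)
  field_simp
  ring
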